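/- For the family B_per of periodic axis-parallel boxes in [0,1]^d and all n ≥ 2, the minimal dispersion satisfies disp_{B_per}(n,d) ≤ (4d/n) log(2n). -/

import Mathlib

/-!
Put `δ = 2 d log(2n) / n` and `m = ⌈2d/δ⌉`. Rounding the corners of a periodic box inwards to the
grid `(1/m)ℤ^d` shortens each side by at most `2/m`, hence costs at most `2d/m ≤ δ` of volume, so
every periodic box of volume `> 2δ` contains a grid box of volume `≥ δ`. There are at most
`(m+1)^{2d}` grid boxes, and `n` uniformly random points miss a fixed one of them with probability
at most `(1-δ)^n ≤ e^{-nδ} = (2n)^{-2d}`. As `(m+1)^{2d} (2n)^{-2d} ≤ (log 2n)^{-2d} < 1`, some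
`n` points meet every grid box of volume `≥ δ`, hence every periodic box of volume `> 2δ`.
-/

open MeasureTheory Set

/-- The periodic interval `I(x,y)`. -/
noncomputable def periodicInterval (x y : ℝ) : Set ℝ :=
  if x < y then Set.Ioo x y else Set.Icc 0 1 \ Set.Icc y x

/-- The periodic axis-parallel box `∏_k I_k(x,y)`. -/
noncomputable def periodicBox {d : ℕ} (x y : Fin d → ℝ) : Set (Fin d → ℝ) :=
  Set.univ.pi fun k => periodicInterval (x k) (y k)

/-- The family of periodic axis-parallel boxes on `[0,1]^d`. -/
noncomputable def Bper (d : ℕ) : Set (Set (Fin d → ℝ)) :=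
  {B | ∃ x y : Fin d → ℝ, (∀ k, x k ∈ Set.Icc (0:ℝ) 1) ∧
    (∀ k, y k ∈ Set.Icc (0:ℝ) 1) ∧ B = periodicBox x y}

open scoped ENNReal

noncomputable def periodicLength (x y : ℝ) : ℝ :=
  if x < y then y - x else 1 - (x - y)

section PeriodicInterval

variable {x y : ℝ}

lemma periodicLength_nonneg (hx : x ∈ Icc (0:ℝ) 1) (hy : y ∈ Icc (0:ℝ) 1) :
    0 ≤ periodicLength x y := by
  unfold periodicLength
  split_ifs <;> linarith [hx.2, hy.1]

lemma periodicLength_le_one (hx : x ∈ Icc (0:ℝ) 1) (hy : y ∈ Icc (0:ℝ) 1) :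
    periodicLength x y ≤ 1 := by
  unfold periodicLength
  split_ifs <;> linarith [hx.1, hy.2]

lemma periodicInterval_subset_Icc (hx : x ∈ Icc (0:ℝ) 1) (hy : y ∈ Icc (0:ℝ) 1) :
    periodicInterval x y ⊆ Icc 0 1 := by
  unfold periodicInterval
  split_ifs
  · exact Ioo_subset_Icc_self.trans (Icc_subset_Icc hx.1 hy.2)
  · exact sdiff_subset

lemma measurableSet_periodicInterval (x y : ℝ) : MeasurableSet (periodicInterval x y) := by
  unfold periodicInterval
  split_ifs
  · exact measurableSet_Ioo
  · exact measurableSet_Icc.diff measurableSet_Icc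

lemma volume_periodicInterval (hx : x ∈ Icc (0:ℝ) 1) (hy : y ∈ Icc (0:ℝ) 1) :
    volume (periodicInterval x y) = ENNReal.ofReal (periodicLength x y) := by
  unfold periodicInterval periodicLength
  split_ifs with h
  · exact Real.volume_Ioo
  · rw [measure_sdiff (Icc_subset_Icc hy.1 hx.2) measurableSet_Icc.nullMeasurableSet
      measure_Icc_lt_top.ne, Real.volume_Icc, Real.volume_Icc,
      ← ENNReal.ofReal_sub _ (by linarith : (0:ℝ) ≤ x - y)]
    ring_nf

/-- The length hypothesis stops an ordinary interval from turning into a wrap-around one. -/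
lemma periodicInterval_subset_of_shrink {u v ε : ℝ} (hxu : x ≤ u) (hux : u - x ≤ ε)
    (hvy : v ≤ y) (hyv : y - v ≤ ε) (hlen : 2 * ε < periodicLength x y) :
    periodicInterval u v ⊆ periodicInterval x y ∧
      periodicLength u v ≤ periodicLength x y ∧
      periodicLength x y - 2 * ε ≤ periodicLength u v := by
  unfold periodicInterval periodicLength at *
  by_cases hxy : x < y
  · rw [if_pos hxy] at hlen
    have huv : u < v := by linarith
    simp only [if_pos hxy, if_pos huv]
    exact ⟨Ioo_subset_Ioo hxu hvy, by linarith, by linarith⟩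
  · have huv : ¬ u < v := by linarith
    simp only [if_neg hxy, if_neg huv]
    exact ⟨sdiff_subset_sdiff_right (Icc_subset_Icc hvy hxu), by linarith, by linarith⟩

end PeriodicInterval

lemma prod_sub_sum_le_prod {R ι : Type*} [CommRing R] [LinearOrder R] [IsStrictOrderedRing R]
    (s : Finset ι) {f g : ι → R} (hf : ∀ i ∈ s, 0 ≤ f i) (hfg : ∀ i ∈ s, f i ≤ g i)
    (hg : ∀ i ∈ s, g i ≤ 1) :
    ∏ i ∈ s, g i - ∑ i ∈ s, (g i - f i) ≤ ∏ i ∈ s, f i := by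
  induction s using Finset.cons_induction with
  | empty => simp
  | cons a s ha ih =>
    simp only [Finset.forall_mem_cons] at hf hfg hg
    simp only [Finset.prod_cons, Finset.sum_cons]
    have hG₀ : 0 ≤ ∏ i ∈ s, g i := Finset.prod_nonneg fun i hi => (hf.2 i hi).trans (hfg.2 i hi)
    have hG₁ : ∏ i ∈ s, g i ≤ 1 :=
      Finset.prod_le_one (fun i hi => (hf.2 i hi).trans (hfg.2 i hi)) hg.2
    have hS : 0 ≤ ∑ i ∈ s, (g i - f i) := Finset.sum_nonneg fun i hi => sub_nonneg.2 (hfg.2 i hi)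
    nlinarith [mul_le_mul_of_nonneg_left (ih hf.2 hfg.2 hg.2) hf.1]

section Grid

variable {m : ℕ}

lemma fin_val_div_mem_Icc (a : Fin (m + 1)) : ((a : ℕ) : ℝ) / m ∈ Icc (0:ℝ) 1 :=
  ⟨by positivity, div_le_one_of_le₀ (by exact_mod_cast Nat.lt_succ_iff.mp a.isLt) (by positivity)⟩

/-- Rounding `x` up and `y` down to the grid `(1/m)ℤ`. -/
lemma exists_grid_periodicInterval_subset (hm : 0 < m) {x y : ℝ} (hx : x ∈ Icc (0:ℝ) 1)
    (hy : y ∈ Icc (0:ℝ) 1) (hlen : 2 / (m:ℝ) < periodicLength x y) :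
    ∃ a b : Fin (m + 1),
      periodicInterval ((a : ℕ) / m) ((b : ℕ) / m) ⊆ periodicInterval x y ∧
      periodicLength ((a : ℕ) / m) ((b : ℕ) / m) ≤ periodicLength x y ∧
      periodicLength x y - 2 / m ≤ periodicLength ((a : ℕ) / m) ((b : ℕ) / m) := by
  have hm' : (0:ℝ) < m := by exact_mod_cast hm
  have ha : ⌈m * x⌉₊ < m + 1 :=
    Nat.lt_succ_of_le (Nat.ceil_le.2 (by nlinarith [hx.2]))
  have hb : ⌊m * y⌋₊ < m + 1 :=
    Nat.lt_succ_of_le (Nat.floor_le_of_le (by nlinarith [hy.2]))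
  refine ⟨⟨_, ha⟩, ⟨_, hb⟩, ?_⟩
  have hxu : x ≤ ⌈m * x⌉₊ / m := by
    rw [le_div_iff₀ hm', mul_comm]; exact Nat.le_ceil _
  have hux : ⌈m * x⌉₊ / m - x ≤ 1 / m := by
    rw [div_sub' hm'.ne', div_le_div_iff_of_pos_right hm']
    linarith [Nat.ceil_lt_add_one (by nlinarith [hx.1] : 0 ≤ m * x)]
  have hvy : ⌊m * y⌋₊ / m ≤ y := by
    rw [div_le_iff₀ hm', mul_comm]; exact Nat.floor_le (by nlinarith [hy.1])
  have hyv : y - ⌊m * y⌋₊ / m ≤ 1 / m := by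
    rw [sub_div' hm'.ne', div_le_div_iff_of_pos_right hm']
    linarith [Nat.lt_floor_add_one (m * y)]
  simpa only [mul_one_div] using
    periodicInterval_subset_of_shrink hxu hux hvy hyv (by rwa [mul_one_div])

end Grid

def unitCube (d : ℕ) : Set (Fin d → ℝ) := univ.pi fun _ => Icc 0 1

noncomputable def gridBox {d : ℕ} (m : ℕ) (a b : Fin d → Fin (m + 1)) : Set (Fin d → ℝ) :=
  periodicBox (fun k => ((a k : ℕ) : ℝ) / m) (fun k => ((b k : ℕ) : ℝ) / m)

section PeriodicBox

variable {d : ℕ}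

lemma volume_unitCube : volume (unitCube d) = 1 := by
  rw [unitCube, volume_pi_pi]
  simp

lemma unitCube_infinite (hd : 1 ≤ d) : (unitCube d).Infinite := by
  have : Nonempty (Fin d) := ⟨⟨0, hd⟩⟩
  intro hfin
  simpa [volume_unitCube] using hfin.measure_zero volume

variable {x y : Fin d → ℝ}

lemma measurableSet_periodicBox (x y : Fin d → ℝ) : MeasurableSet (periodicBox x y) :=
  .univ_pi fun _ => measurableSet_periodicInterval _ _

lemma periodicBox_subset_unitCube (hx : ∀ k, x k ∈ Icc (0:ℝ) 1) (hy : ∀ k, y k ∈ Icc (0:ℝ) 1) :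
    periodicBox x y ⊆ unitCube d :=
  pi_mono fun k _ => periodicInterval_subset_Icc (hx k) (hy k)

lemma volume_periodicBox (hx : ∀ k, x k ∈ Icc (0:ℝ) 1) (hy : ∀ k, y k ∈ Icc (0:ℝ) 1) :
    volume (periodicBox x y) = ENNReal.ofReal (∏ k, periodicLength (x k) (y k)) := by
  rw [periodicBox, volume_pi_pi,
    ENNReal.ofReal_prod_of_nonneg fun k _ => periodicLength_nonneg (hx k) (hy k)]
  exact Finset.prod_congr rfl fun k _ => volume_periodicInterval (hx k) (hy k)

lemma exists_gridBox_subset {m : ℕ} (hm : 0 < m) (hx : ∀ k, x k ∈ Icc (0:ℝ) 1)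
    (hy : ∀ k, y k ∈ Icc (0:ℝ) 1) (hlen : ∀ k, 2 / (m:ℝ) < periodicLength (x k) (y k)) :
    ∃ a b : Fin d → Fin (m + 1), gridBox m a b ⊆ periodicBox x y ∧
      ENNReal.ofReal (∏ k, periodicLength (x k) (y k) - 2 * d / m) ≤
        volume (gridBox m a b) := by
  choose a b hsub hle hge using
    fun k => exists_grid_periodicInterval_subset hm (hx k) (hy k) (hlen k)
  refine ⟨a, b, pi_mono fun k _ => hsub k, ?_⟩
  rw [gridBox, volume_periodicBox (fun k => fin_val_div_mem_Icc (a k))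
    (fun k => fin_val_div_mem_Icc (b k))]
  gcongr
  have hloss : ∑ k, (periodicLength (x k) (y k) - periodicLength ((a k : ℕ) / m) ((b k : ℕ) / m))
      ≤ 2 * d / m := by
    calc _ ≤ ∑ _k : Fin d, 2 / (m:ℝ) := Finset.sum_le_sum fun k _ => by linarith [hge k]
      _ = 2 * d / m := by simp only [Finset.sum_const, Finset.card_univ, Fintype.card_fin,
            nsmul_eq_mul]; ring
  calc _ ≤ ∏ k, periodicLength (x k) (y k) - ∑ k, (periodicLength (x k) (y k) -
          periodicLength ((a k : ℕ) / m) ((b k : ℕ) / m)) := by linarith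
    _ ≤ _ := prod_sub_sum_le_prod _
          (fun k _ => periodicLength_nonneg (fin_val_div_mem_Icc _) (fin_val_div_mem_Icc _))
          (fun k _ => hle k) (fun k _ => periodicLength_le_one (hx k) (hy k))

end PeriodicBox

/-- With `n` independent samples from `μ`, a fixed set of measure at least `δ` is missed with
probability at most `(1 - δ) ^ n`; a union bound over the finite family does the rest. -/
lemma exists_forall_exists_mem_of_card_mul_lt_one {α ι : Type*} [MeasurableSpace α] [Fintype ι]
    (μ : Measure α) [SigmaFinite μ] {C : Set α} (hC : μ C = 1) {A : ι → Set α}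
    (hAC : ∀ j, A j ⊆ C) (hA : ∀ j, MeasurableSet (A j)) {δ : ℝ≥0∞} (hδ : ∀ j, δ ≤ μ (A j))
    {n : ℕ} (hcount : Fintype.card ι * (1 - δ) ^ n < 1) :
    ∃ ω : Fin n → α, (∀ i, ω i ∈ C) ∧ ∀ j, ∃ i, ω i ∈ A j := by
  set ν := Measure.pi fun _ : Fin n => μ
  set bad : Set (Fin n → α) := ⋃ j, univ.pi fun _ => C \ A j
  have hmiss : ∀ j, ν (univ.pi fun _ => C \ A j) ≤ (1 - δ) ^ n := by
    intro j
    rw [Measure.pi_pi, Finset.prod_const, Finset.card_univ, Fintype.card_fin,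
      measure_sdiff (hAC j) (hA j).nullMeasurableSet (ne_top_of_le_ne_top (by simp [hC])
        (measure_mono (hAC j))), hC]
    gcongr
    exact hδ j
  have hbad : ν bad < ν (univ.pi fun _ => C) := by
    calc ν bad ≤ ∑ j, ν (univ.pi fun _ => C \ A j) := measure_iUnion_fintype_le _ _
      _ ≤ ∑ _j : ι, (1 - δ) ^ n := Finset.sum_le_sum fun j _ => hmiss j
      _ < 1 := by simpa using hcount
      _ = _ := by simp [ν, Measure.pi_pi, hC]
  obtain ⟨ω, hωC, hωbad⟩ := not_subset.1 fun h => (measure_mono h).not_gt hbad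
  refine ⟨ω, fun i => hωC i (mem_univ i), fun j => ?_⟩
  by_contra! hmissed
  exact hωbad (mem_iUnion.2 ⟨j, fun i _ => ⟨hωC i (mem_univ i), hmissed i⟩⟩)

lemma exists_finset_inter_gridBox_nonempty {d m n : ℕ} {δ : ℝ} (hδ₀ : 0 ≤ δ) (hδ₁ : δ ≤ 1)
    (hcount : ((m:ℝ) + 1) ^ (2 * d) * (1 - δ) ^ n < 1) :
    ∃ P : Finset (Fin d → ℝ), (P : Set (Fin d → ℝ)) ⊆ unitCube d ∧ P.card ≤ n ∧
      ∀ a b : Fin d → Fin (m + 1), ENNReal.ofReal δ ≤ volume (gridBox m a b) →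
        (gridBox m a b ∩ P).Nonempty := by
  classical
  let ι := {p : (Fin d → Fin (m + 1)) × (Fin d → Fin (m + 1)) //
    ENNReal.ofReal δ ≤ volume (gridBox m p.1 p.2)}
  have hcard : (Fintype.card ι : ℝ≥0∞) * (1 - ENNReal.ofReal δ) ^ n < 1 := by
    calc (Fintype.card ι : ℝ≥0∞) * (1 - ENNReal.ofReal δ) ^ n
        ≤ ENNReal.ofReal (((m:ℝ) + 1) ^ (2 * d)) * ENNReal.ofReal ((1 - δ) ^ n) := by
          have hι : Fintype.card ι ≤ (m + 1) ^ (2 * d) := by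
            refine (Fintype.card_subtype_le _).trans_eq ?_
            simp [Fintype.card_prod, two_mul, pow_add]
          have hcast : ENNReal.ofReal (((m:ℝ) + 1) ^ (2 * d)) = ((m + 1) ^ (2 * d) : ℕ) := by
            rw [← ENNReal.ofReal_natCast]; push_cast; rfl
          rw [hcast, ENNReal.ofReal_pow (sub_nonneg.2 hδ₁), ENNReal.ofReal_sub _ hδ₀,
            ENNReal.ofReal_one]
          gcongr
      _ < 1 := by
          rw [← ENNReal.ofReal_mul (by positivity)]
          exact ENNReal.ofReal_lt_one.2 hcount
  obtain ⟨ω, hωC, hωA⟩ := exists_forall_exists_mem_of_card_mul_lt_one volume volume_unitCube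
    (A := fun p : ι => gridBox m p.1.1 p.1.2)
    (fun p => periodicBox_subset_unitCube (fun _ => fin_val_div_mem_Icc _)
      (fun _ => fin_val_div_mem_Icc _))
    (fun p => measurableSet_periodicBox _ _) (fun p => p.2) hcard
  refine ⟨Finset.univ.image ω, by simpa [Set.subset_def] using hωC,
    Finset.card_image_le.trans (by simp), fun a b hab => ?_⟩
  obtain ⟨i, hi⟩ := hωA ⟨(a, b), hab⟩
  exact ⟨ω i, hi, by simp⟩

noncomputable def dispersion {d : ℕ} (P : Set (Fin d → ℝ)) : ℝ≥0∞ :=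
  ⨆ B ∈ Bper d, ⨆ _ : Disjoint B P, volume B

noncomputable def minimalDispersion (d n : ℕ) : ℝ≥0∞ :=
  ⨅ P : {P : Finset (Fin d → ℝ) // P.card = n ∧ (P : Set (Fin d → ℝ)) ⊆ unitCube d},
    dispersion (P : Set (Fin d → ℝ))

section Dispersion

variable {d : ℕ}

lemma dispersion_anti {P Q : Set (Fin d → ℝ)} (h : P ⊆ Q) : dispersion Q ≤ dispersion P :=
  iSup₂_mono fun _ _ => iSup_mono' fun hQ => ⟨hQ.mono_right h, le_rfl⟩

lemma dispersion_le_one (P : Set (Fin d → ℝ)) : dispersion P ≤ 1 := by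
  refine iSup₂_le fun B hB => iSup_le fun _ => ?_
  obtain ⟨x, y, hx, hy, rfl⟩ := hB
  exact (measure_mono (periodicBox_subset_unitCube hx hy)).trans volume_unitCube.le

lemma minimalDispersion_le_dispersion (hd : 1 ≤ d) {n : ℕ} {P₀ : Finset (Fin d → ℝ)}
    (hP₀ : (P₀ : Set (Fin d → ℝ)) ⊆ unitCube d) (hcard : P₀.card ≤ n) :
    minimalDispersion d n ≤ dispersion (P₀ : Set (Fin d → ℝ)) := by
  classical
  obtain ⟨t, htC, htn⟩ := (unitCube_infinite hd).exists_subset_card_eq n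
  obtain ⟨P, hP₀P, hPt, hPn⟩ := Finset.exists_subsuperset_card_eq Finset.subset_union_left hcard
    (htn.symm.le.trans (Finset.card_le_card Finset.subset_union_right))
  have hPC : (P : Set (Fin d → ℝ)) ⊆ unitCube d := by
    refine (Finset.coe_subset.2 hPt).trans ?_
    rw [Finset.coe_union]
    exact union_subset hP₀ htC
  exact (iInf_le _ ⟨P, hPn, hPC⟩).trans (dispersion_anti (Finset.coe_subset.2 hP₀P))

lemma dispersion_le_of_forall_gridBox_inter_nonempty {m : ℕ} (hm : 0 < m) {δ : ℝ}
    (hδ : 2 * d / m ≤ δ) {P : Set (Fin d → ℝ)}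
    (hP : ∀ a b, ENNReal.ofReal δ ≤ volume (gridBox m a b) → (gridBox m a b ∩ P).Nonempty) :
    dispersion P ≤ ENNReal.ofReal (2 * δ) := by
  refine iSup₂_le fun B hB => iSup_le fun hdisj => ?_
  obtain ⟨x, y, hx, hy, rfl⟩ := hB
  rw [volume_periodicBox hx hy]
  refine ENNReal.ofReal_le_ofReal (not_lt.1 fun hlarge => ?_)
  have hlen : ∀ k, 2 / (m:ℝ) < periodicLength (x k) (y k) := by
    intro k
    have hd : (1:ℝ) ≤ d := by exact_mod_cast k.pos
    have hmesh : 2 / (m:ℝ) ≤ 2 * d / m := by gcongr; linarith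
    have hfactor : ∏ j, periodicLength (x j) (y j) ≤ periodicLength (x k) (y k) := by
      simpa using Finset.prod_le_prod_of_subset_of_le_one (Finset.subset_univ {k})
        (fun j _ => periodicLength_nonneg (hx j) (hy j))
        (fun j _ _ => periodicLength_le_one (hx j) (hy j))
    have : 0 ≤ 2 * (d:ℝ) / m := by positivity
    linarith
  obtain ⟨a, b, hsub, hvol⟩ := exists_gridBox_subset hm hx hy hlen
  obtain ⟨z, hzB, hzP⟩ := hP a b ((ENNReal.ofReal_le_ofReal (by linarith)).trans hvol)
  exact disjoint_left.1 hdisj (hsub hzB) hzP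

end Dispersion

lemma one_lt_log_two_mul {n : ℕ} (hn : 2 ≤ n) : 1 < Real.log (2 * n) := by
  have : (4:ℝ) ≤ 2 * n := by
    have : (2:ℝ) ≤ n := by exact_mod_cast hn
    linarith
  rw [Real.lt_log_iff_exp_lt (by linarith)]
  linarith [Real.exp_one_lt_d9]

lemma pow_mul_one_sub_pow_lt_one {d n : ℕ} (hd : 1 ≤ d) (hn : 2 ≤ n) {δ K : ℝ}
    (hnδ : n * δ = 2 * d * Real.log (2 * n)) (hδ₁ : δ ≤ 1) (hK₀ : 0 ≤ K) (hK : K ≤ 4 * d / δ) :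
    K ^ (2 * d) * (1 - δ) ^ n < 1 := by
  have hL := one_lt_log_two_mul hn
  have hn₀ : (0:ℝ) < n := by exact_mod_cast (by omega : 0 < n)
  have hδ₀ : 0 < δ := by
    have : (0:ℝ) < 2 * d * Real.log (2 * n) := mul_pos (by positivity) (by linarith)
    nlinarith
  have hexp : (1 - δ) ^ n ≤ ((2 * n : ℝ) ^ (2 * d))⁻¹ := by
    calc (1 - δ) ^ n ≤ Real.exp (-δ) ^ n :=
          pow_le_pow_left₀ (by linarith) (by linarith [Real.add_one_le_exp (-δ)]) n
      _ = Real.exp (-(n * δ)) := by rw [← Real.exp_nat_mul]; ring_nf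
      _ = _ := by
          rw [hnδ, Real.exp_neg, show 2 * (d:ℝ) * Real.log (2 * n) =
            ((2 * d : ℕ) : ℝ) * Real.log (2 * n) by push_cast; ring, Real.exp_nat_mul,
            Real.exp_log (by positivity)]
  have hratio : 4 * d / δ / (2 * n) = (Real.log (2 * n))⁻¹ := by
    field_simp
    linarith
  calc K ^ (2 * d) * (1 - δ) ^ n ≤ (4 * d / δ) ^ (2 * d) * ((2 * n : ℝ) ^ (2 * d))⁻¹ := by
        gcongr
    _ = (Real.log (2 * n))⁻¹ ^ (2 * d) := by
        rw [← hratio, div_pow _ (2 * (n:ℝ)), ← div_eq_mul_inv]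
    _ < 1 := pow_lt_one₀ (by positivity) (inv_lt_one_of_one_lt₀ hL) (by omega)

lemma minimalDispersion_le_two_mul {d n m : ℕ} (hd : 1 ≤ d) (hm : 0 < m) {δ : ℝ}
    (hδ : 2 * d / m ≤ δ) (hδ₁ : δ ≤ 1) (hcount : ((m:ℝ) + 1) ^ (2 * d) * (1 - δ) ^ n < 1) :
    minimalDispersion d n ≤ ENNReal.ofReal (2 * δ) := by
  obtain ⟨P, hPC, hPn, hP⟩ :=
    exists_finset_inter_gridBox_nonempty ((by positivity : (0:ℝ) ≤ 2 * d / m).trans hδ) hδ₁ hcount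
  exact (minimalDispersion_le_dispersion hd hPC hPn).trans
    (dispersion_le_of_forall_gridBox_inter_nonempty hm hδ hP)

theorem stmt11 (d : ℕ) (hd : 1 ≤ d) (n : ℕ) (hn : 2 ≤ n) :
    (⨅ P : {P : Finset (Fin d → ℝ) //
        P.card = n ∧ (↑P : Set (Fin d → ℝ)) ⊆ Set.univ.pi fun _ => Set.Icc (0:ℝ) 1},
      ⨆ B ∈ Bper d, ⨆ _ : Disjoint B ((P : Finset (Fin d → ℝ)) : Set (Fin d → ℝ)),
        volume B) ≤
      ENNReal.ofReal (4 * d / n * Real.log (2 * n)) := by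
  set δ : ℝ := 2 * d * Real.log (2 * n) / n with hδ
  have hn₀ : (0:ℝ) < n := by exact_mod_cast (by omega : 0 < n)
  have hd₁ : (1:ℝ) ≤ d := by exact_mod_cast hd
  have hnδ : n * δ = 2 * d * Real.log (2 * n) := by rw [hδ]; field_simp
  have hδ₀ : 0 < δ := div_pos (mul_pos (by positivity) (by linarith [one_lt_log_two_mul hn])) hn₀
  rw [show 4 * (d:ℝ) / n * Real.log (2 * n) = 2 * δ by rw [hδ]; ring]
  change minimalDispersion d n ≤ _
  rcases le_or_gt 1 (2 * δ) with hbig | hsmall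
  · exact (minimalDispersion_le_dispersion hd (P₀ := ∅) (by simp) (by simp)).trans
      ((dispersion_le_one _).trans (ENNReal.one_le_ofReal.2 hbig))
  set m := ⌈2 * d / δ⌉₊
  have hm₀ : 0 < m := Nat.ceil_pos.2 (by positivity)
  have hm : 2 * d / δ ≤ m := Nat.le_ceil _
  have hm₁ : (m:ℝ) + 1 ≤ 4 * d / δ := by
    have h2 : 2 ≤ 2 * d / δ := by rw [le_div_iff₀ hδ₀]; linarith
    linarith [Nat.ceil_lt_add_one (by positivity : 0 ≤ 2 * d / δ),
      show 4 * d / δ = 2 * (2 * d / δ) by ring]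
  refine minimalDispersion_le_two_mul hd hm₀ ?_ (by linarith)
    (pow_mul_one_sub_pow_lt_one hd hn hnδ (by linarith) (by positivity) hm₁)
  rw [div_le_iff₀ (by exact_mod_cast hm₀)]
  rw [div_le_iff₀ hδ₀] at hm
  linarith
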